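/- There exists an absolute constant C₀ > 0 such that the following holds. Let G be a connected r-regular graph on n vertices with 1 − λ ≥ C₀·√((log n)/n), and consider the BIPS process on G with source v and parameter k = 2 started from any A_0 with |A_0| ≥ (9/10)·n. Then for every t ≥ 0, Pr(|A_t| < (9/10)·n) ≤ t·n^{−8}. -/

import Mathlib

open Finset

noncomputable section

variable {V : Type*}

/-- The random-walk transition matrix `P = A(G)/r` of a graph `G`. -/
def transMatrix [Fintype V] (G : SimpleGraph V) [DecidableRel G.Adj] (r : ℕ) :
    Matrix V V ℝ :=
  Matrix.of fun x y => if G.Adj x y then (r : ℝ)⁻¹ else 0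

/-- `λ = max_{i ≥ 2} |λ_i|`: the largest absolute value of an eigenvalue of the
transition matrix on the space orthogonal to the constant vectors.  For a connected
regular graph this is exactly the second largest eigenvalue in absolute value. -/
def secondEigen [Fintype V] (G : SimpleGraph V) [DecidableRel G.Adj] (r : ℕ) : ℝ :=
  sSup {y : ℝ | ∃ (μ : ℝ) (f : V → ℝ), y = |μ| ∧ f ≠ 0 ∧ (∑ x, f x) = 0 ∧
    (transMatrix G r).mulVec f = μ • f}

/-- `d_A(x) = |N(x) ∩ A|`. -/
def degIn [Fintype V] [DecidableEq V] (G : SimpleGraph V) [DecidableRel G.Adj]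
    (A : Finset V) (x : V) : ℕ :=
  (G.neighborFinset x ∩ A).card

/-- Probability that a vertex `u` choosing `k` uniform random neighbours (with
replacement) in an `r`-regular graph hits the set `A` at least once. -/
def pInf [Fintype V] [DecidableEq V] (G : SimpleGraph V) [DecidableRel G.Adj]
    (r k : ℕ) (A : Finset V) (u : V) : ℝ :=
  1 - (1 - (degIn G A u : ℝ) / (r : ℝ)) ^ k

/-- One-step transition probability of the BIPS process with source `v` and parameter `k`:
each `u ≠ v` is independently infected with probability `pInf`, and `v` is always infected. -/
def bipsStep [Fintype V] [DecidableEq V] (G : SimpleGraph V) [DecidableRel G.Adj]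
    (r k : ℕ) (v : V) (A B : Finset V) : ℝ :=
  if v ∈ B then
    ∏ u ∈ Finset.univ.erase v, (if u ∈ B then pInf G r k A u else 1 - pInf G r k A u)
  else 0

/-- Marginal distribution at time `t` of the Markov chain with one-step transition
probabilities `step` started at `A₀`. -/
def chainProb [Fintype V] [DecidableEq V] (step : Finset V → Finset V → ℝ)
    (A₀ : Finset V) : ℕ → Finset V → ℝ
  | 0, B => if B = A₀ then 1 else 0
  | (t+1), B => ∑ A : Finset V, chainProb step A₀ t A * step A B

/-- Probability of the trajectory `ω 0, ω 1, …, ω T` for the Markov chain with one-step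
transition probabilities `step` started at `A₀`. -/
def trajProb [DecidableEq V] (step : Finset V → Finset V → ℝ) (A₀ : Finset V) (T : ℕ)
    (ω : Fin (T+1) → Finset V) : ℝ :=
  (if ω 0 = A₀ then (1:ℝ) else 0) * ∏ i : Fin T, step (ω i.castSucc) (ω i.succ)

open scoped Classical in
/-- Probability that the trajectory `(A_0, …, A_T)` of the chain satisfies `Q`. -/
def trajPr [Fintype V] [DecidableEq V] (step : Finset V → Finset V → ℝ)
    (A₀ : Finset V) (T : ℕ) (Q : (Fin (T+1) → Finset V) → Prop) : ℝ :=
  ∑ ω : Fin (T+1) → Finset V, if Q ω then trajProb step A₀ T ω else 0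

open scoped Classical in
/-- One-step transition probability of the COBRA process with branching factor `k`:
every vertex of `C` chooses `k` neighbours independently and uniformly at random with
replacement, and `B` is the set of all chosen vertices. -/
def cobraStep [Fintype V] [DecidableEq V] (G : SimpleGraph V) [DecidableRel G.Adj]
    (k : ℕ) (C B : Finset V) : ℝ :=
  ∑ f : ↥C → Fin k → V,
    if (∀ x : ↥C, ∀ i : Fin k, G.Adj (x : V) (f x i)) ∧
        B = Finset.image (fun p : ↥C × Fin k => f p.1 p.2) Finset.univ then
      ∏ x : ↥C, ((G.degree (x : V) : ℝ)⁻¹) ^ k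
    else 0

/-- `Pr(cov(u) > T)`: probability that after `T` rounds of the COBRA process started at
`C_0 = {u}` the sets `C_1, …, C_T` have not yet covered all vertices. -/
def prCovGT [Fintype V] [DecidableEq V] (G : SimpleGraph V) [DecidableRel G.Adj]
    (k : ℕ) (u : V) (T : ℕ) : ℝ :=
  trajPr (cobraStep G k) {u} T (fun ω => ∃ x : V, ∀ s : Fin (T+1), s ≠ 0 → x ∉ ω s)

/-- `Pr(infec(v) > T)`: probability that after `T` rounds of the BIPS process with
source `v` (started from `A_0 = {v}`) the infected set is not yet the whole vertex set. -/
def prInfecGT [Fintype V] [DecidableEq V] (G : SimpleGraph V) [DecidableRel G.Adj]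
    (r k : ℕ) (v : V) (T : ℕ) : ℝ :=
  trajPr (bipsStep G r k v) {v} T (fun ω => ∀ s : Fin (T+1), ω s ≠ Finset.univ)

/-- Probability that a vertex `u` hits `A` when it chooses one uniform random neighbour,
and then with probability `ρ` a second (independent, uniform) neighbour. -/
def pInfRho [Fintype V] [DecidableEq V] (G : SimpleGraph V) [DecidableRel G.Adj]
    (r : ℕ) (ρ : ℝ) (A : Finset V) (u : V) : ℝ :=
  1 - (1 - (degIn G A u : ℝ) / (r : ℝ)) * (1 - ρ * (degIn G A u : ℝ) / (r : ℝ))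

/-- One-step transition probability of the BIPS process with expected branching factor
`1 + ρ` and source `v`. -/
def bipsRhoStep [Fintype V] [DecidableEq V] (G : SimpleGraph V) [DecidableRel G.Adj]
    (r : ℕ) (ρ : ℝ) (v : V) (A B : Finset V) : ℝ :=
  if v ∈ B then
    ∏ u ∈ Finset.univ.erase v,
      (if u ∈ B then pInfRho G r ρ A u else 1 - pInfRho G r ρ A u)
  else 0

open scoped Classical in
/-- One-step transition probability of the COBRA process with expected branching factor
`1 + ρ`: each vertex of `C` chooses one uniform random neighbour and, independently with
probability `ρ`, a second uniform random neighbour; `B` is the set of all chosen vertices. -/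
def cobraRhoStep [Fintype V] [DecidableEq V] (G : SimpleGraph V) [DecidableRel G.Adj]
    (ρ : ℝ) (C B : Finset V) : ℝ :=
  ∑ f : ↥C → V, ∑ g : ↥C → Option V,
    if (∀ x : ↥C, G.Adj (x : V) (f x)) ∧
        (∀ x : ↥C, ∀ y : V, g x = some y → G.Adj (x : V) y) ∧
        B = Finset.image f Finset.univ ∪
          Finset.univ.biUnion (fun x : ↥C => (g x).toFinset) then
      ∏ x : ↥C, ((G.degree (x : V) : ℝ)⁻¹ *
        Option.elim (g x) (1 - ρ) (fun _ => ρ * (G.degree (x : V) : ℝ)⁻¹))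
    else 0

/-- `Pr(cov(u) > T)` for the COBRA process with expected branching factor `1 + ρ`. -/
def prCovRhoGT [Fintype V] [DecidableEq V] (G : SimpleGraph V) [DecidableRel G.Adj]
    (ρ : ℝ) (u : V) (T : ℕ) : ℝ :=
  trajPr (cobraRhoStep G ρ) {u} T (fun ω => ∃ x : V, ∀ s : Fin (T+1), s ≠ 0 → x ∉ ω s)

end

/-!
From a set `A` with `|A| ≥ 9n/10`, the next BIPS set is `{v}` together with independent
Bernoulli choices of the other vertices, `u` being infected with probability
`1 - (1 - x_u)² = 2 x_u - x_u²`, where `x = P 𝟙_A`, i.e. `x_u = d_A(u) / r`. Hence the expected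
size is `2|A| - ‖P 𝟙_A‖²`, and since `P` fixes the constants and contracts the sum-zero part of
`𝟙_A` by the factor `λ`, it exceeds `9n/10` by at least `0.09 n (1 - λ²)`. A Chernoff bound makes
a drop below `9n/10` in one step have probability at most `exp (-(0.09 n (1 - λ²))² / 4n)`,
which is at most `n⁻⁸` once `1 - λ ≥ 100 √(log n / n)`; a union bound over the `t` steps
concludes.
-/

open Finset Real

section IndepSubset

variable {ι : Type*} [DecidableEq ι] (p : ι → ℝ) (E : Finset ι)

def indepSubsetProb (S : Finset ι) : ℝ :=
  (∏ u ∈ S, p u) * ∏ u ∈ E \ S, (1 - p u)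

variable {p}

theorem indepSubsetProb_nonneg (hp0 : ∀ u, 0 ≤ p u) (hp1 : ∀ u, p u ≤ 1) (S : Finset ι) :
    0 ≤ indepSubsetProb p E S :=
  mul_nonneg (prod_nonneg fun u _ => hp0 u) (prod_nonneg fun u _ => sub_nonneg.2 (hp1 u))

variable (p)

theorem sum_indepSubsetProb_mul_pow (x : ℝ) :
    ∑ S ∈ E.powerset, indepSubsetProb p E S * x ^ S.card = ∏ u ∈ E, (1 - (1 - x) * p u) := by
  have hfactor : ∀ u ∈ E, 1 - (1 - x) * p u = p u * x + (1 - p u) := fun u _ => by ring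
  rw [prod_congr rfl hfactor, prod_add]
  refine sum_congr rfl fun S _ => ?_
  rw [indepSubsetProb, prod_mul_distrib, prod_const]
  ring

theorem sum_indepSubsetProb : ∑ S ∈ E.powerset, indepSubsetProb p E S = 1 := by
  simpa using sum_indepSubsetProb_mul_pow p E 1

variable {p}

theorem sum_indepSubsetProb_mul_pow_le (hp0 : ∀ u, 0 ≤ p u) (hp1 : ∀ u, p u ≤ 1)
    {x : ℝ} (hx : 0 ≤ x) :
    ∑ S ∈ E.powerset, indepSubsetProb p E S * x ^ S.card ≤
      exp (-((1 - x) * ∑ u ∈ E, p u)) := by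
  rw [sum_indepSubsetProb_mul_pow, mul_sum, ← sum_neg_distrib, exp_sum]
  refine prod_le_prod (fun u _ => ?_) fun u _ => ?_
  · nlinarith [hp0 u, hp1 u]
  · linarith [add_one_le_exp (-((1 - x) * p u))]

theorem sum_indepSubsetProb_card_lt_le (hp0 : ∀ u, 0 ≤ p u) (hp1 : ∀ u, p u ≤ 1)
    {a s m : ℝ} (hm : 0 < m) (hmean : ∑ u ∈ E, p u ≤ m) (hs : 0 ≤ s) (hsm : s ≤ 2 * m)
    (has : a + s ≤ ∑ u ∈ E, p u) :
    ∑ S ∈ E.powerset with (S.card : ℝ) < a, indepSubsetProb p E S ≤ exp (-s ^ 2 / (4 * m)) := by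
  set μ := ∑ u ∈ E, p u
  set h := s / (2 * m)
  have hh0 : 0 ≤ h := by positivity
  have hh1 : h ≤ 1 := (div_le_one (by positivity)).2 hsm
  have hμ : 0 ≤ μ := sum_nonneg fun u _ => hp0 u
  -- Markov's inequality for `exp (-h |S|)`, with the optimal `h = s / 2m`
  have markov : ∀ S ∈ E.powerset, (if (S.card : ℝ) < a then indepSubsetProb p E S else 0) ≤
      exp (h * a) * (indepSubsetProb p E S * exp (-h) ^ S.card) := by
    intro S _
    have hw := indepSubsetProb_nonneg E hp0 hp1 S
    rw [← exp_nat_mul, mul_left_comm, ← exp_add]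
    split_ifs with ha
    · exact le_mul_of_one_le_right hw (one_le_exp (by nlinarith))
    · positivity
  have hexp : exp (-h) ≤ 1 - h + h ^ 2 := by
    have := abs_le.1 (abs_exp_sub_one_sub_id_le (x := -h) (by rwa [abs_neg, abs_of_nonneg hh0]))
    linarith [this.2]
  have hexponent : h * a + -((1 - exp (-h)) * μ) ≤ -s ^ 2 / (4 * m) := by
    have hsq : -(h * s) + h ^ 2 * m = -s ^ 2 / (4 * m) := by
      simp only [h]
      field_simp
      ring
    nlinarith [mul_le_mul_of_nonneg_right hexp hμ, mul_le_mul_of_nonneg_left hmean (sq_nonneg h)]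
  calc ∑ S ∈ E.powerset with (S.card : ℝ) < a, indepSubsetProb p E S
      ≤ ∑ S ∈ E.powerset, exp (h * a) * (indepSubsetProb p E S * exp (-h) ^ S.card) := by
        rw [sum_filter]; exact sum_le_sum markov
    _ ≤ exp (h * a) * exp (-((1 - exp (-h)) * μ)) := by
        rw [← mul_sum]
        exact mul_le_mul_of_nonneg_left
          (sum_indepSubsetProb_mul_pow_le E hp0 hp1 (exp_pos _).le) (exp_pos _).le
    _ ≤ exp (-s ^ 2 / (4 * m)) := by rw [← exp_add]; exact exp_le_exp.2 hexponent

end IndepSubset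

section MarkovChain

variable {V : Type*} [Fintype V] {step : Finset V → Finset V → ℝ}

structure IsStochastic (step : Finset V → Finset V → ℝ) : Prop where
  nonneg : ∀ A B, 0 ≤ step A B
  sum_eq_one : ∀ A, ∑ B, step A B = 1

namespace IsStochastic

theorem sum_le_one (h : IsStochastic step) (A : Finset V) (s : Finset (Finset V)) :
    ∑ B ∈ s, step A B ≤ 1 :=
  h.sum_eq_one A ▸ sum_le_sum_of_subset_of_nonneg (subset_univ s) fun B _ _ => h.nonneg A B

theorem chainProb_nonneg [DecidableEq V] (h : IsStochastic step) (A₀ : Finset V) (t : ℕ)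
    (B : Finset V) :
    0 ≤ chainProb step A₀ t B := by
  induction t generalizing B with
  | zero => simp only [chainProb]; split_ifs <;> norm_num
  | succ t ih => exact sum_nonneg fun A _ => mul_nonneg (ih A) (h.nonneg A B)

theorem sum_chainProb [DecidableEq V] (h : IsStochastic step) (A₀ : Finset V) (t : ℕ) :
    ∑ B, chainProb step A₀ t B = 1 := by
  induction t with
  | zero => simp [chainProb]
  | succ t ih => simp only [chainProb]; rw [sum_comm]; simp [← mul_sum, h.sum_eq_one, ih]

theorem sum_chainProb_filter_le [DecidableEq V] (h : IsStochastic step) {bad : Finset V → Prop}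
    [DecidablePred bad] {A₀ : Finset V} (hA₀ : ¬ bad A₀) {q : ℝ}
    (hq : ∀ A, ¬ bad A → ∑ B with bad B, step A B ≤ q) (t : ℕ) :
    ∑ B with bad B, chainProb step A₀ t B ≤ t * q := by
  have hq0 : 0 ≤ q := (sum_nonneg fun B _ => h.nonneg A₀ B).trans (hq A₀ hA₀)
  have hexit : ∀ A, ∑ B with bad B, step A B ≤ (if bad A then 1 else 0) + q := by
    intro A
    split_ifs with hA
    · linarith [h.sum_le_one A (univ.filter bad)]
    · linarith [hq A hA]
  induction t with
  | zero => simp [chainProb, hA₀]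
  | succ t ih =>
    calc ∑ B with bad B, chainProb step A₀ (t + 1) B
        = ∑ A, chainProb step A₀ t A * ∑ B with bad B, step A B := by
          simp only [chainProb]; rw [sum_comm]; simp only [mul_sum]
      _ ≤ ∑ A, chainProb step A₀ t A * ((if bad A then 1 else 0) + q) :=
          sum_le_sum fun A _ => mul_le_mul_of_nonneg_left (hexit A) (h.chainProb_nonneg A₀ t A)
      _ = (∑ A with bad A, chainProb step A₀ t A) + q := by
          simp [mul_add, sum_add_distrib, ← sum_mul, h.sum_chainProb, sum_filter]
      _ ≤ (t + 1 : ℕ) * q := by push_cast; linarith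

end IsStochastic

end MarkovChain

section BipsStep

variable {V : Type*} [Fintype V] [DecidableEq V] {G : SimpleGraph V} [DecidableRel G.Adj]
  {r : ℕ}

theorem degIn_div_le_one (hreg : G.IsRegularOfDegree r) (A : Finset V) (u : V) :
    (degIn G A u : ℝ) / r ≤ 1 := by
  refine div_le_one_of_le₀ ?_ r.cast_nonneg
  rw [degIn, ← hreg u, ← G.card_neighborFinset_eq_degree]
  exact_mod_cast card_le_card inter_subset_left

theorem pInf_nonneg (hreg : G.IsRegularOfDegree r) (k : ℕ) (A : Finset V) (u : V) :
    0 ≤ pInf G r k A u := by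
  have hx0 : 0 ≤ (degIn G A u : ℝ) / r := by positivity
  have hx1 := degIn_div_le_one hreg A u
  exact sub_nonneg.2 (pow_le_one₀ (by linarith) (by linarith))

theorem pInf_le_one (hreg : G.IsRegularOfDegree r) (k : ℕ) (A : Finset V) (u : V) :
    pInf G r k A u ≤ 1 :=
  sub_le_self _ (pow_nonneg (sub_nonneg.2 (degIn_div_le_one hreg A u)) k)

variable (G r) {k : ℕ} {v : V} {A : Finset V}

theorem bipsStep_insert {S : Finset V} (hvS : v ∉ S) :
    bipsStep G r k v A (insert v S) =
      indepSubsetProb (pInf G r k A) (univ.erase v) S := by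
  rw [bipsStep, if_pos (mem_insert_self v S), prod_ite, indepSubsetProb]
  congr 1 <;> apply prod_congr _ fun _ _ => rfl <;> ext u <;> by_cases hu : u = v <;>
    simp [hu, hvS]

theorem sum_bipsStep_mul (g : Finset V → ℝ) :
    ∑ B, bipsStep G r k v A B * g B =
      ∑ S ∈ (univ.erase v).powerset,
        indepSubsetProb (pInf G r k A) (univ.erase v) S * g (insert v S) := by
  rw [← powerset_univ, ← insert_erase (mem_univ v), sum_powerset_insert (notMem_erase v univ),
    erase_insert (notMem_erase v univ)]
  have hout : ∀ B ∈ (univ.erase v).powerset, bipsStep G r k v A B * g B = 0 := fun B hB => by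
    rw [bipsStep, if_neg fun h => (mem_erase.1 (mem_powerset.1 hB h)).1 rfl, zero_mul]
  rw [sum_eq_zero hout, zero_add]
  exact sum_congr rfl fun S hS => by
    rw [bipsStep_insert G r fun h => (mem_erase.1 (mem_powerset.1 hS h)).1 rfl]

theorem sum_bipsStep_card_lt (c : ℝ) :
    ∑ B with (B.card : ℝ) < c, bipsStep G r k v A B =
      ∑ S ∈ (univ.erase v).powerset with (S.card : ℝ) < c - 1,
        indepSubsetProb (pInf G r k A) (univ.erase v) S := by
  have h := sum_bipsStep_mul G r (k := k) (v := v) (A := A)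
    fun B => if (B.card : ℝ) < c then 1 else 0
  simp only [mul_boole] at h
  rw [sum_filter, sum_filter, h]
  refine sum_congr rfl fun S hS => ?_
  have hvS : v ∉ S := fun h => (mem_erase.1 (mem_powerset.1 hS h)).1 rfl
  simp only [card_insert_of_notMem hvS, Nat.cast_add, Nat.cast_one, lt_sub_iff_add_lt]

variable {G r}

theorem isStochastic_bipsStep (hreg : G.IsRegularOfDegree r) (k : ℕ) (v : V) :
    IsStochastic (bipsStep G r k v) where
  nonneg A B := by
    unfold bipsStep
    split_ifs
    · exact prod_nonneg fun u _ => by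
        split_ifs <;> linarith [pInf_nonneg hreg k A u, pInf_le_one hreg k A u]
    · exact le_rfl
  sum_eq_one A := by
    simpa [sum_indepSubsetProb] using sum_bipsStep_mul G r (k := k) (v := v) (A := A) fun _ => 1

end BipsStep

section Spectral

theorem LinearMap.IsSymmetric.norm_apply_le {𝕜 E : Type*} [RCLike 𝕜] [NormedAddCommGroup E]
    [InnerProductSpace 𝕜 E] [FiniteDimensional 𝕜 E] {T : E →ₗ[𝕜] E} (hT : T.IsSymmetric)
    {n : ℕ} (hn : Module.finrank 𝕜 E = n) {c : ℝ} (hc : 0 ≤ c)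
    (hμ : ∀ i, |hT.eigenvalues hn i| ≤ c) (x : E) : ‖T x‖ ≤ c * ‖x‖ := by
  set b := hT.eigenvectorBasis hn
  have hsq : ‖T x‖ ^ 2 ≤ (c * ‖x‖) ^ 2 := by
    rw [← b.repr.norm_map, ← b.repr.norm_map x, mul_pow, EuclideanSpace.norm_sq_eq,
      EuclideanSpace.norm_sq_eq, mul_sum]
    refine sum_le_sum fun i _ => ?_
    rw [hT.eigenvectorBasis_apply_self_apply, norm_mul, mul_pow, RCLike.norm_ofReal]
    gcongr
    exact hμ i
  exact (pow_le_pow_iff_left₀ (norm_nonneg _) (by positivity) two_ne_zero).1 hsq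

open Matrix

variable {V : Type*} [Fintype V] (G : SimpleGraph V) [DecidableRel G.Adj] {r : ℕ}

def sumZero (V : Type*) [Fintype V] : Submodule ℝ (EuclideanSpace ℝ V) where
  carrier := {f | ∑ x, f x = 0}
  add_mem' := by simp_all [sum_add_distrib]
  zero_mem' := by simp
  smul_mem' := by simp_all [← mul_sum]

theorem transMatrix_eq_smul_adjMatrix : transMatrix G r = (r : ℝ)⁻¹ • G.adjMatrix ℝ := by
  ext x y
  simp [transMatrix, SimpleGraph.adjMatrix_apply]

theorem isSymm_transMatrix : (transMatrix G r).IsSymm := by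
  rw [transMatrix_eq_smul_adjMatrix]
  exact G.isSymm_adjMatrix.smul _

theorem transMatrix_mulVec_indicator [DecidableEq V] (A : Finset V) (u : V) :
    (transMatrix G r *ᵥ fun y => if y ∈ A then 1 else 0) u = degIn G A u / r := by
  simp [transMatrix_eq_smul_adjMatrix, smul_mulVec, degIn, div_eq_inv_mul]

variable {G}

theorem transMatrix_mulVec_one (hreg : G.IsRegularOfDegree r) (hr : r ≠ 0) :
    transMatrix G r *ᵥ 1 = 1 := by
  ext u
  simp [transMatrix_eq_smul_adjMatrix, smul_mulVec, hreg u, hr]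

theorem sum_transMatrix_mulVec (hreg : G.IsRegularOfDegree r) (hr : r ≠ 0) (f : V → ℝ) :
    ∑ x, (transMatrix G r *ᵥ f) x = ∑ x, f x := by
  rw [← one_dotProduct, dotProduct_mulVec, ← mulVec_transpose,
    (isSymm_transMatrix G).eq, transMatrix_mulVec_one hreg hr, one_dotProduct]

variable (G r)

theorem secondEigen_nonneg : 0 ≤ secondEigen G r :=
  Real.sSup_nonneg <| by rintro _ ⟨μ, -, rfl, -⟩; exact abs_nonneg μ

variable {G r}

theorem abs_le_secondEigen {μ : ℝ} {f : V → ℝ} (hf : f ≠ 0) (hsum : ∑ x, f x = 0)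
    (hμ : transMatrix G r *ᵥ f = μ • f) : |μ| ≤ secondEigen G r := by
  classical
  refine le_csSup ?_ ⟨μ, f, rfl, hf, hsum, hμ⟩
  -- a matrix has finitely many eigenvalues
  refine ((Module.End.finite_hasEigenvalue (toLin' (transMatrix G r))).image abs
    |>.bddAbove.mono ?_)
  rintro _ ⟨μ', f', rfl, hf', -, hμ'⟩
  exact ⟨μ', Module.End.hasEigenvalue_of_hasEigenvector
    ⟨Module.End.mem_eigenspace_iff.2 (by rwa [toLin'_apply]), hf'⟩, rfl⟩

theorem sum_sq_transMatrix_mulVec_le [DecidableEq V] (hreg : G.IsRegularOfDegree r) (hr : r ≠ 0)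
    {f : V → ℝ} (hf : ∑ x, f x = 0) :
    ∑ x, (transMatrix G r *ᵥ f) x ^ 2 ≤ secondEigen G r ^ 2 * ∑ x, f x ^ 2 := by
  have hinv : ∀ g ∈ sumZero V, (transMatrix G r).toEuclideanLin g ∈ sumZero V := fun g hg => by
    simpa [sumZero, toLpLin_apply, sum_transMatrix_mulVec hreg hr] using hg
  have hT := (isSymmetric_toEuclideanLin_iff.2
    (isHermitian_iff_isSymm.2 (isSymm_transMatrix G))).restrict_invariant hinv
  have hμ : ∀ i, |hT.eigenvalues rfl i| ≤ secondEigen G r := fun i => by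
    set b := hT.eigenvectorBasis rfl
    refine abs_le_secondEigen (f := WithLp.ofLp (b i : EuclideanSpace ℝ V)) ?_ (b i).2 ?_
    · intro h
      exact b.orthonormal.ne_zero i (Subtype.ext (by simpa using congrArg (WithLp.toLp 2) h))
    · have h := congrArg (fun g => WithLp.ofLp g.1) (hT.apply_eigenvectorBasis rfl i)
      simp only [LinearMap.coe_restrict_apply, Submodule.coe_smul] at h
      exact h
  have hnorm := hT.norm_apply_le rfl (secondEigen_nonneg G r) hμ ⟨WithLp.toLp 2 f, hf⟩
  simpa [mul_pow, EuclideanSpace.real_norm_sq_eq, toLpLin_apply] using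
    pow_le_pow_left₀ (norm_nonneg _) hnorm 2

end Spectral

theorem threshold_add_margin_le {n a c : ℝ} (hn : 0 < n) (ha : 9 / 10 * n ≤ a) (han : a ≤ n)
    (hc : c ≤ 1) : 9 / 10 * n + 9 / 100 * n * c ≤ a + c * a * (1 - a / n) := by
  have hα0 : 1 / 10 ≤ a / n := by rw [le_div_iff₀ hn]; linarith
  have hα1 : a / n ≤ 1 := (div_le_one hn).2 han
  have hfactor : 0 ≤ 1 - c * (a / n - 1 / 10) := by
    nlinarith [mul_nonneg (sub_nonneg.2 hc) (sub_nonneg.2 hα0)]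
  have key : a + c * a * (1 - a / n) - (9 / 10 * n + 9 / 100 * n * c) =
      (a - 9 / 10 * n) * (1 - c * (a / n - 1 / 10)) := by
    field_simp
    ring
  linarith [mul_nonneg (sub_nonneg.2 ha) hfactor]

theorem exp_neg_sq_div_le_inv_pow {n ℓ : ℝ} (hn : 1 ≤ n) (hℓ : 0 ≤ ℓ)
    (hgap : 100 * √(log n / n) ≤ 1 - ℓ) :
    exp (-(9 / 100 * n * (1 - ℓ ^ 2)) ^ 2 / (4 * n)) ≤ (n ^ 8)⁻¹ := by
  have hn0 : 0 < n := by linarith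
  have hlog : 0 ≤ log n := log_nonneg hn
  have hgap_sq : 10000 * log n ≤ n * (1 - ℓ) ^ 2 := by
    have h := pow_le_pow_left₀ (by positivity) hgap 2
    rw [mul_pow, sq_sqrt (by positivity)] at h
    rw [← div_le_iff₀' hn0, mul_div_assoc]
    linarith
  have hℓ1 : 0 ≤ 1 - ℓ := by linarith [sqrt_nonneg (log n / n)]
  have hs : 9 / 100 * n * (1 - ℓ) ≤ 9 / 100 * n * (1 - ℓ ^ 2) := by
    nlinarith [mul_nonneg (mul_nonneg hn0.le hℓ) hℓ1]
  have hs_sq : 81 * n * log n ≤ (9 / 100 * n * (1 - ℓ ^ 2)) ^ 2 := by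
    nlinarith [pow_le_pow_left₀ (by positivity) hs 2]
  calc exp (-(9 / 100 * n * (1 - ℓ ^ 2)) ^ 2 / (4 * n))
      ≤ exp (-(8 * log n)) := by
        refine exp_le_exp.2 ?_
        rw [neg_div, neg_le_neg_iff, le_div_iff₀ (by positivity)]
        nlinarith
    _ = (n ^ 8)⁻¹ := by
        rw [exp_neg, show (8 : ℝ) * log n = (8 : ℕ) * log n by norm_num, exp_nat_mul,
          exp_log hn0]

section Bips

open Matrix

variable {V : Type*} [Fintype V] [DecidableEq V] {G : SimpleGraph V} [DecidableRel G.Adj]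
  {r : ℕ}

/-- Expander-mixing estimate for the expected size of the next BIPS set with `k = 2`. -/
theorem sum_pInf_two_ge [Nonempty V] (hreg : G.IsRegularOfDegree r) (hr : r ≠ 0)
    (A : Finset V) :
    (A.card : ℝ) + (1 - secondEigen G r ^ 2) * A.card * (1 - A.card / Fintype.card V) ≤
      ∑ u, pInf G r 2 A u := by
  set n : ℝ := (Fintype.card V : ℝ)
  set α : ℝ := A.card / n
  have hαn : n * α = A.card := mul_div_cancel₀ _ (by positivity)
  set ind : V → ℝ := fun y => if y ∈ A then 1 else 0
  set x := transMatrix G r *ᵥ ind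
  have hsum_ind : ∑ y, ind y = A.card := by simp [ind]
  have hsum_x : ∑ u, x u = A.card := (sum_transMatrix_mulVec hreg hr ind).trans hsum_ind
  have hcentered : ∑ y, (ind y - α) = 0 := by simp [sum_sub_distrib, hsum_ind, hαn, n]
  have hPcentered : transMatrix G r *ᵥ (fun y => ind y - α) = fun u => x u - α := by
    have : (fun y => ind y - α) = ind - α • 1 := by ext; simp
    rw [this, mulVec_sub, mulVec_smul, transMatrix_mulVec_one hreg hr]
    ext; simp [x]
  have hspec := sum_sq_transMatrix_mulVec_le hreg hr hcentered
  have hvar_ind : ∑ y, (ind y - α) ^ 2 = A.card * (1 - α) := by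
    have : ∀ y, (ind y - α) ^ 2 = ind y * (1 - 2 * α) + α ^ 2 := fun y => by
      by_cases hy : y ∈ A <;> simp [ind, hy]; ring
    simp only [this, sum_add_distrib, ← sum_mul, hsum_ind, sum_const, card_univ, nsmul_eq_mul]
    linear_combination α * hαn
  have hvar_x : ∑ u, x u ^ 2 = ∑ u, (x u - α) ^ 2 + α * A.card := by
    have : ∀ u, x u ^ 2 = (x u - α) ^ 2 + 2 * α * x u - α ^ 2 := fun u => by ring
    simp only [this, sum_sub_distrib, sum_add_distrib, ← mul_sum, hsum_x, sum_const, card_univ,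
      nsmul_eq_mul]
    linear_combination (-α) * hαn
  have hpInf : ∑ u, pInf G r 2 A u = 2 * A.card - ∑ u, x u ^ 2 := by
    have : ∀ u, pInf G r 2 A u = 2 * x u - x u ^ 2 := fun u => by
      rw [pInf, show x u = _ from transMatrix_mulVec_indicator G A u]; ring
    simp only [this, sum_sub_distrib, ← mul_sum, hsum_x]
  rw [hPcentered, hvar_ind] at hspec
  rw [hpInf, hvar_x]
  linarith

theorem sum_bipsStep_card_lt_le_exp [Nonempty V] (hreg : G.IsRegularOfDegree r) (hr : r ≠ 0)
    (hℓ1 : secondEigen G r ≤ 1) (v : V) {A : Finset V}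
    (hA : 9 / 10 * (Fintype.card V : ℝ) ≤ A.card) :
    ∑ B with (B.card : ℝ) < 9 / 10 * (Fintype.card V : ℝ), bipsStep G r 2 v A B ≤
      exp (-(9 / 100 * (Fintype.card V : ℝ) * (1 - secondEigen G r ^ 2)) ^ 2 /
        (4 * (Fintype.card V : ℝ))) := by
  set n : ℝ := (Fintype.card V : ℝ)
  set ℓ := secondEigen G r
  set E := univ.erase v
  have hn : 0 < n := by positivity
  have hℓ : 0 ≤ ℓ := secondEigen_nonneg G r
  have hAn : (A.card : ℝ) ≤ n := by simp only [n]; exact_mod_cast card_le_univ A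
  have hpInf_E : ∑ u ∈ E, pInf G r 2 A u ≤ n :=
    (sum_le_sum_of_subset_of_nonneg (subset_univ E) fun u _ _ => pInf_nonneg hreg 2 A u).trans
      ((sum_le_sum fun u _ => pInf_le_one hreg 2 A u).trans (by simp [n]))
  -- the mean of `|B|` exceeds the threshold by `s = 0.09 n (1 - λ²)`
  have hmargin : 9 / 10 * n - 1 + 9 / 100 * n * (1 - ℓ ^ 2) ≤ ∑ u ∈ E, pInf G r 2 A u := by
    have hmean := sum_pInf_two_ge hreg hr A
    rw [sum_erase_eq_sub (mem_univ v)]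
    have h1 := threshold_add_margin_le hn hA hAn (c := 1 - ℓ ^ 2) (by nlinarith)
    linarith [pInf_le_one hreg 2 A v]
  have hℓsq : 0 ≤ 1 - ℓ ^ 2 := by nlinarith
  rw [sum_bipsStep_card_lt]
  exact sum_indepSubsetProb_card_lt_le E (pInf_nonneg hreg 2 A) (pInf_le_one hreg 2 A) hn
    hpInf_E (by positivity) (by nlinarith) hmargin

theorem sum_bipsStep_card_lt_le_inv_pow (hconn : G.Connected) (hreg : G.IsRegularOfDegree r)
    (hgap : 100 * √(log (Fintype.card V) / Fintype.card V) ≤ 1 - secondEigen G r) (v : V)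
    {A : Finset V} (hA : 9 / 10 * (Fintype.card V : ℝ) ≤ A.card) :
    ∑ B with (B.card : ℝ) < 9 / 10 * (Fintype.card V : ℝ), bipsStep G r 2 v A B ≤
      ((Fintype.card V : ℝ) ^ 8)⁻¹ := by
  have : Nonempty V := hconn.nonempty
  rcases subsingleton_or_nontrivial V with hV | hV
  · have hcard : Fintype.card V = 1 :=
      le_antisymm (Fintype.card_le_one_iff_subsingleton.2 hV) Fintype.card_pos
    simpa [hcard] using (isStochastic_bipsStep hreg 2 v).sum_le_one A _
  · have hr : r ≠ 0 := hreg v ▸ (hconn.preconnected.degree_pos_of_nontrivial v).ne'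
    have hℓ1 : secondEigen G r ≤ 1 := by
      linarith [sqrt_nonneg (log (Fintype.card V) / Fintype.card V)]
    exact (sum_bipsStep_card_lt_le_exp hreg hr hℓ1 v hA).trans <|
      exp_neg_sq_div_le_inv_pow (by exact_mod_cast Fintype.card_pos) (secondEigen_nonneg G r) hgap

end Bips

universe u

/-- inequality (17) in the proof of Lemma 9.  There is an absolute
constant `C₀ > 0` such that for every connected `r`-regular graph `G` on `n` vertices
with `1 - λ ≥ C₀·√(log n / n)`, the BIPS process with source `v`, `k = 2`, started from
any `A₀ ∋ v` with `|A₀| ≥ (9/10)·n`, satisfies `Pr(|A_t| < (9/10)·n) ≤ t·n^{-8}` for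
every `t ≥ 0`. -/
theorem bips_large_stays_large :
    ∃ C₀ : ℝ, 0 < C₀ ∧
      ∀ (V : Type u) [Fintype V] [DecidableEq V] (G : SimpleGraph V)
        [DecidableRel G.Adj] (r : ℕ),
        G.Connected → G.IsRegularOfDegree r →
        1 - secondEigen G r ≥
          C₀ * Real.sqrt (Real.log (Fintype.card V) / (Fintype.card V)) →
        ∀ (v : V) (A₀ : Finset V), v ∈ A₀ →
          (9/10 : ℝ) * (Fintype.card V : ℝ) ≤ (A₀.card : ℝ) →
          ∀ t : ℕ,
            (∑ B ∈ Finset.univ.filter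
                (fun B : Finset V => (B.card : ℝ) < (9/10) * (Fintype.card V : ℝ)),
              chainProb (bipsStep G r 2 v) A₀ t B) ≤
              (t : ℝ) / (Fintype.card V : ℝ) ^ 8 := by
  refine ⟨100, by norm_num, fun V _ _ G _ r hconn hreg hgap v A₀ _ hA₀ t => ?_⟩
  rw [div_eq_mul_inv]
  exact (isStochastic_bipsStep hreg 2 v).sum_chainProb_filter_le
    (bad := fun B => (B.card : ℝ) < 9 / 10 * Fintype.card V) (not_lt.2 hA₀)
    (fun A hA => sum_bipsStep_card_lt_le_inv_pow hconn hreg hgap v (not_lt.1 hA)) t
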